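/- For all natural numbers n, m, ℓ with ℓ ≤ m ≤ ℓ + n, the identity ∑_{k=0}^{ℓ} C(m,k) · C(ℓ−k+n, n) = (m!/(n!·ℓ!)) · (d^{ℓ+n−m}/dx^{ℓ+n−m})[(x+1)^{n} (x+2)^{ℓ}]|_{x=0} holds, where the right-hand side involves the (ℓ+n−m)-th iterated derivative at 0 of the real function x ↦ (x+1)^n (x+2)^ℓ. (This is the formula χ_{m≥ℓ}(n|m;ℓ) of Theorem 3.1, computing h^0(O_{P^{n|m}}(ℓ)) in the case m ≥ ℓ.) -/

import Mathlib

/-!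
Expanding `(x + 2) ^ ℓ = ((x + 1) + 1) ^ ℓ` binomially writes `(x + 1) ^ n * (x + 2) ^ ℓ` as
`∑ C(ℓ, k) (x + 1) ^ (n + k)`, whose `D`-th derivative at `0` is `∑ C(ℓ, k) (n + k)! / (n + k - D)!`.
With `D = ℓ + n - m`, reindexing `k ↦ ℓ - k` matches this termwise with the left-hand side,
by writing every binomial coefficient as a quotient of factorials.
-/

open Finset
open scoped Nat

theorem iteratedDeriv_add_const_pow {𝕜 : Type*} [NontriviallyNormedField 𝕜] (D N : ℕ) (c x : 𝕜) :
    iteratedDeriv D (fun y => (y + c) ^ N) x = N.descFactorial D * (x + c) ^ (N - D) := by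
  rw [iteratedDeriv_comp_add_const D (· ^ N) c]
  exact iteratedDeriv_pow N D

theorem add_one_pow_mul_add_two_pow {R : Type*} [CommSemiring R] (n ℓ : ℕ) (x : R) :
    (x + 1) ^ n * (x + 2) ^ ℓ = ∑ k ∈ range (ℓ + 1), ℓ.choose k * (x + 1) ^ (n + k) := by
  rw [show x + 2 = (x + 1) + 1 by ring, add_pow (x + 1) 1 ℓ, mul_sum]
  exact sum_congr rfl fun k _ => by ring

theorem iteratedDeriv_add_one_pow_mul_add_two_pow_zero {𝕜 : Type*} [NontriviallyNormedField 𝕜]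
    (D n ℓ : ℕ) :
    iteratedDeriv D (fun x : 𝕜 => (x + 1) ^ n * (x + 2) ^ ℓ) 0 =
      ∑ k ∈ range (ℓ + 1), (ℓ.choose k * (n + k).descFactorial D : 𝕜) := by
  simp_rw [add_one_pow_mul_add_two_pow]
  rw [iteratedDeriv_fun_sum fun k _ => by fun_prop]
  simp [iteratedDeriv_add_const_pow]

theorem choose_mul_choose_mul_factorial_mul_factorial {n m ℓ k : ℕ} (hk : k ≤ ℓ) (h1 : ℓ ≤ m)
    (h2 : m ≤ ℓ + n) :
    m.choose (ℓ - k) * (k + n).choose n * (n ! * ℓ !) =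
      m ! * (ℓ.choose k * (n + k).descFactorial (ℓ + n - m)) := by
  have hm := Nat.choose_mul_factorial_mul_factorial (show ℓ - k ≤ m by omega)
  have hn := Nat.choose_mul_factorial_mul_factorial (Nat.le_add_right n k)
  have hℓ := Nat.choose_mul_factorial_mul_factorial hk
  have hd := Nat.factorial_mul_descFactorial (show ℓ + n - m ≤ n + k by omega)
  rw [show n + k - (ℓ + n - m) = m - (ℓ - k) by omega] at hd
  rw [Nat.add_sub_cancel_left] at hn
  rw [add_comm k n]
  apply Nat.eq_of_mul_eq_mul_right (Nat.factorial_pos (m - (ℓ - k)))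
  linear_combination m ! * ℓ.choose k * hn - m ! * ℓ.choose k * hd
    + ℓ.choose k * (n + k).choose n * n ! * k ! * hm
    - (n + k).choose n * n ! * m.choose (ℓ - k) * (m - (ℓ - k))! * hℓ

theorem stmt_1 (n m ℓ : ℕ) (h1 : ℓ ≤ m) (h2 : m ≤ ℓ + n) :
    ((∑ k ∈ Finset.range (ℓ + 1), m.choose k * (ℓ - k + n).choose n : ℕ) : ℝ) =
      ((m.factorial : ℝ) / ((n.factorial : ℝ) * (ℓ.factorial : ℝ))) *
        iteratedDeriv (ℓ + n - m) (fun x : ℝ => (x + 1) ^ n * (x + 2) ^ ℓ) 0 := by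
  rw [iteratedDeriv_add_one_pow_mul_add_two_pow_zero, mul_sum, ← sum_range_reflect, Nat.cast_sum]
  refine sum_congr rfl fun k hk_mem => ?_
  have hk : k ≤ ℓ := Nat.lt_succ_iff.mp (mem_range.mp hk_mem)
  rw [add_tsub_cancel_right, Nat.sub_sub_self hk, div_mul_eq_mul_div, eq_div_iff (by positivity)]
  exact_mod_cast choose_mul_choose_mul_factorial_mul_factorial hk h1 h2
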